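/- The pignistic transform of m equals the pignistic transform of its fractal-based BPA m_F: BetP_{m_F}(θ) = BetP_m(θ) for every θ. -/

import Mathlib

open Finset Real Filter

/-- A basic probability assignment on the power set of a finite frame `Θ`. -/
noncomputable def IsBPA {Θ : Type*} [Fintype Θ] [DecidableEq Θ] (m : Finset Θ → ℝ) : Prop :=
  m ∅ = 0 ∧ (∀ F, 0 ≤ m F) ∧ ∑ F : Finset Θ, m F = 1

/-- The fractal-based basic probability assignment:
`m_F(F) = m(F)/(2^|F|-1) + Σ_{F ⊊ G} m(G)/(2^|G|-1)`. -/
noncomputable def mF {Θ : Type*} [Fintype Θ] [DecidableEq Θ] (m : Finset Θ → ℝ) (F : Finset Θ) : ℝ :=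
  m F / ((2 : ℝ) ^ F.card - 1) +
    ∑ G ∈ Finset.univ.filter (fun G : Finset Θ => F ⊂ G), m G / ((2 : ℝ) ^ G.card - 1)

/-- Fractal-based belief entropy: Shannon entropy of `m_F` over nonempty subsets. -/
noncomputable def EFB {Θ : Type*} [Fintype Θ] [DecidableEq Θ] (m : Finset Θ → ℝ) : ℝ :=
  ∑ F ∈ Finset.univ.filter (fun F : Finset Θ => F.Nonempty), Real.negMulLog (mF m F)

/-- Pignistic probability transformation: `BetP(θ) = Σ_{θ ∈ F} m(F)/|F|`. -/
noncomputable def BetP {Θ : Type*} [Fintype Θ] [DecidableEq Θ] (m : Finset Θ → ℝ) (θ : Θ) : ℝ :=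
  ∑ F ∈ Finset.univ.filter (fun F : Finset Θ => θ ∈ F), m F / (F.card : ℝ)

/-- Plausibility of a singleton: `Pl(θ) = Σ_{θ ∈ F} m(F)`. -/
noncomputable def Pl {Θ : Type*} [Fintype Θ] [DecidableEq Θ] (m : Finset Θ → ℝ) (θ : Θ) : ℝ :=
  ∑ F ∈ Finset.univ.filter (fun F : Finset Θ => θ ∈ F), m F


/-! Expanding `m_F`, `BetP_{m_F}(θ) = Σ_{θ ∈ G} m(G)/(2^|G| - 1) · Σ_{θ ∈ F ⊆ G} 1/|F|`.
Removing `θ` from `F`, the inner sum is `Σ_{t ⊆ G∖θ} 1/(|t|+1) = Σ_k C(n,k)/(k+1)` with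
`n = |G| - 1`, and absorption `C(n,k)/(k+1) = C(n+1,k+1)/(n+1)` turns it into `(2^|G| - 1)/|G|`,
so the factors `2^|G| - 1` cancel. -/

theorem Nat.sum_range_choose_div_add_one (n : ℕ) :
    ∑ k ∈ range (n + 1), (n.choose k : ℝ) / (k + 1) = (2 ^ (n + 1) - 1) / (n + 1) := by
  have h_absorb (k : ℕ) :
      (n.choose k : ℝ) / (k + 1) = ((n + 1).choose (k + 1) : ℝ) / (n + 1) := by
    rw [div_eq_div_iff (by positivity) (by positivity)]
    have h := congrArg (Nat.cast : ℕ → ℝ) (Nat.add_one_mul_choose_eq n k)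
    push_cast at h
    linarith
  have h_row : ∑ k ∈ range (n + 1), ((n + 1).choose (k + 1) : ℝ) = 2 ^ (n + 1) - 1 := by
    have h := Nat.sum_range_choose (n + 1)
    rw [sum_range_succ', Nat.choose_zero_right] at h
    rw [eq_sub_iff_add_eq]
    exact_mod_cast h
  simp_rw [h_absorb, ← sum_div, h_row]

namespace Finset

variable {α : Type*}

theorem sum_powerset_inv_card_add_one (s : Finset α) :
    ∑ t ∈ s.powerset, ((#t : ℝ) + 1)⁻¹ = (2 ^ (#s + 1) - 1) / (#s + 1) := by
  rw [sum_powerset_apply_card (fun k => ((k : ℝ) + 1)⁻¹), ← Nat.sum_range_choose_div_add_one]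
  simp [div_eq_mul_inv]

theorem sum_inv_card_filter_mem_powerset [DecidableEq α] {a : α} {s : Finset α} (ha : a ∈ s) :
    ∑ t ∈ s.powerset with a ∈ t, (#t : ℝ)⁻¹ = (2 ^ #s - 1) / #s := by
  have ha' : a ∉ s.erase a := notMem_erase a s
  rw [sum_filter, ← insert_erase ha, sum_powerset_insert ha']
  have h_notMem {t} (ht : t ∈ (s.erase a).powerset) : a ∉ t :=
    fun h => ha' (mem_powerset.1 ht h)
  rw [sum_eq_zero fun t ht => if_neg (h_notMem ht), zero_add, card_insert_of_notMem ha']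
  calc ∑ t ∈ (s.erase a).powerset, (if a ∈ insert a t then (#(insert a t) : ℝ)⁻¹ else 0)
      = ∑ t ∈ (s.erase a).powerset, ((#t : ℝ) + 1)⁻¹ :=
        sum_congr rfl fun t ht => by
          rw [if_pos (mem_insert_self a t), card_insert_of_notMem (h_notMem ht), Nat.cast_succ]
    _ = _ := by rw [sum_powerset_inv_card_add_one, Nat.cast_succ]

theorem two_pow_card_sub_one_ne_zero {s : Finset α} (hs : s.Nonempty) :
    (2 : ℝ) ^ #s - 1 ≠ 0 := by
  have : (2 : ℝ) ≤ 2 ^ #s := le_self_pow₀ one_le_two hs.card_pos.ne'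
  linarith

end Finset

theorem mF_eq_sum_superset {Θ : Type*} [Fintype Θ] [DecidableEq Θ] (m : Finset Θ → ℝ)
    (F : Finset Θ) : mF m F = ∑ G with F ⊆ G, m G / ((2 : ℝ) ^ #G - 1) := by
  have : univ.filter (F ⊆ ·) = insert F (univ.filter (F ⊂ ·)) := by
    ext G
    simp [← le_iff_eq_or_lt, eq_comm]
  rw [this, sum_insert (by simp), mF]

theorem betP_mF_eq_betP_general {Θ : Type*} [Fintype Θ] [DecidableEq Θ]
    (m : Finset Θ → ℝ) :
    ∀ θ : Θ, BetP (mF m) θ = BetP m θ := by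
  intro θ
  calc BetP (mF m) θ
      = ∑ F with θ ∈ F, ∑ G with F ⊆ G, m G / ((2 : ℝ) ^ #G - 1) / #F := by
        simp_rw [BetP, mF_eq_sum_superset, sum_div]
    _ = ∑ G with θ ∈ G, ∑ F ∈ G.powerset with θ ∈ F, m G / ((2 : ℝ) ^ #G - 1) / #F :=
        sum_comm' fun F G => by
          simp only [mem_filter, mem_univ, true_and, mem_powerset]
          exact ⟨fun h => ⟨⟨h.2, h.1⟩, h.2 h.1⟩, fun h => ⟨h.1.2, h.1.1⟩⟩
    _ = BetP m θ := by
        refine sum_congr rfl fun G hG => ?_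
        have hθG : θ ∈ G := (mem_filter.1 hG).2
        simp_rw [div_eq_mul_inv _ (#_ : ℝ), ← mul_sum, ← div_eq_mul_inv,
          sum_inv_card_filter_mem_powerset hθG]
        field_simp [two_pow_card_sub_one_ne_zero ⟨θ, hθG⟩]

theorem betP_mF_eq_betP {Θ : Type*} [Fintype Θ] [DecidableEq Θ] [Nonempty Θ]
    (m : Finset Θ → ℝ) (hm : IsBPA m) :
    ∀ θ : Θ, BetP (mF m) θ = BetP m θ :=
  betP_mF_eq_betP_general m
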